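/- For black and white bin packing games with uniform sizes and κ even, the price of anarchy is at most 2: every Nash equilibrium uses at most twice the optimal number of open bins. -/

import Mathlib

open Finset

/-- In a uniform-size game, a bin (list of item indices, bottom to top) is
feasible if no two adjacent items share a color and it holds at most `κ` items. -/
def UBinOK {n : ℕ} {C : Type*} (color : Fin n → C) (κ : ℕ) (b : List (Fin n)) : Prop :=
  (b.map color).Chain' (· ≠ ·) ∧ b.length ≤ κ

/-- A strategy profile is a packing if every item occurs in exactly one bin, once. -/
def IsPacking {n : ℕ} (σ : Fin n → List (Fin n)) : Prop :=
  ∀ i : Fin n, (∑ j : Fin n, ((σ j).count i)) = 1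

/-- The number of open (nonempty) bins of a profile. -/
def openBins {n : ℕ} (σ : Fin n → List (Fin n)) : ℕ :=
  (Finset.univ.filter fun j => σ j ≠ []).card

/-- Nash equilibrium of a uniform-size colorful bin packing game (the
egalitarian and proportional cost functions coincide): the profile is a feasible
packing and no item in a bin with `k` items can move to the top of another bin
feasibly holding it with at least `k` items. -/
def UNE {n : ℕ} {C : Type*} (color : Fin n → C) (κ : ℕ)
    (σ : Fin n → List (Fin n)) : Prop :=
  IsPacking σ ∧ (∀ j, UBinOK color κ (σ j)) ∧
    ∀ (i : Fin n) (j j' : Fin n), j ≠ j' → i ∈ σ j →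
      UBinOK color κ (σ j' ++ [i]) → (σ j').length < (σ j).length

/-!
Fix a Nash equilibrium `σ` and any feasible packing `τ`. The open bins of `σ` are singletons
or bins with at least two items.

Two distinct non-full bins with at least two items each contain items of both colours, so an
item of either could move onto the other; hence there is at most one such bin and all other
bins with at least two items are full. Counting items, `κ * #{2 ≤ length} ≤ n + (κ - 2)` and
`n ≤ κ * openBins τ`, so there are at most `openBins τ` of them.

If some singleton holds an item of colour `c`, every non-full bin has top colour `c` (otherwise
that item would move there). The imbalance towards `c` (number of items of colour `c` minus the
others) is then `1` on singletons and nonnegative on every bin of `σ`, while it is at most `1`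
on every open bin of `τ`; since the total imbalance does not depend on the packing, there are
at most `openBins τ` singletons.
-/

def imbalance (c : Bool) (m : List Bool) : ℤ :=
  (m.map fun x => if x = c then 1 else -1).sum

section Imbalance

variable {c : Bool} {m : List Bool}

lemma imbalance_cons_of_isChain (a : Bool) (t : List Bool) (h : (a :: t).IsChain (· ≠ ·)) :
    imbalance c (a :: t) = if Even t.length then (if a = c then 1 else -1) else 0 := by
  induction t generalizing a with
  | nil => simp [imbalance]
  | cons b t ih =>
    obtain ⟨hab, ht⟩ := List.isChain_cons_cons.1 h
    have hb : b = !a := by cases a <;> cases b <;> simp_all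
    rw [imbalance, List.map_cons, List.sum_cons, ← imbalance, ih b ht, hb]
    cases a <;> cases c <;> by_cases he : Even t.length <;>
      simp [he, Nat.even_add_one]

lemma imbalance_le_one (h : m.IsChain (· ≠ ·)) : imbalance c m ≤ 1 := by
  cases m with
  | nil => simp [imbalance]
  | cons a t => rw [imbalance_cons_of_isChain a t h]; split_ifs <;> norm_num

lemma imbalance_eq_zero_of_even_length (h : m.IsChain (· ≠ ·)) (he : Even m.length) :
    imbalance c m = 0 := by
  cases m with
  | nil => simp [imbalance]
  | cons a t =>
    rw [List.length_cons, Nat.even_add_one] at he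
    rw [imbalance_cons_of_isChain a t h, if_neg he]

lemma imbalance_reverse (c : Bool) (m : List Bool) : imbalance c m.reverse = imbalance c m := by
  rw [imbalance, List.map_reverse, List.sum_reverse, imbalance]

lemma imbalance_nonneg_of_getLast? (h : m.IsChain (· ≠ ·)) (hc : ∀ x ∈ m.getLast?, x = c) :
    0 ≤ imbalance c m := by
  rw [← imbalance_reverse]
  have hrev : m.reverse.IsChain (· ≠ ·) := List.isChain_reverse.2 (h.imp fun _ _ => Ne.symm)
  rw [← List.head?_reverse] at hc
  cases hm : m.reverse with
  | nil => simp [imbalance]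
  | cons a t =>
    rw [hm] at hrev hc
    rw [imbalance_cons_of_isChain a t hrev, if_pos (hc a rfl)]
    split_ifs <;> norm_num

end Imbalance

lemma List.sum_map_eq_sum_count_nsmul {α M : Type*} [Fintype α] [DecidableEq α]
    [AddCommMonoid M] (l : List α) (g : α → M) : (l.map g).sum = ∑ a, l.count a • g a := by
  rw [Finset.sum_list_map_count]
  exact sum_subset (subset_univ _) fun a _ ha => by
    rw [List.count_eq_zero_of_not_mem (mt List.mem_toFinset.2 ha), zero_smul]

section Packing

variable {n : ℕ} {σ τ : Fin n → List (Fin n)}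

lemma IsPacking.sum_sum_map {M : Type*} [AddCommMonoid M] (hσ : IsPacking σ) (g : Fin n → M) :
    ∑ j, ((σ j).map g).sum = ∑ i, g i := by
  simp_rw [List.sum_map_eq_sum_count_nsmul]
  rw [sum_comm]
  simp only [← sum_smul, hσ _, one_smul]

lemma IsPacking.sum_length (hσ : IsPacking σ) : ∑ j, (σ j).length = n := by
  simpa [List.map_const', List.sum_replicate_nat] using hσ.sum_sum_map fun _ => (1 : ℕ)

lemma IsPacking.sum_imbalance_eq (hσ : IsPacking σ) (hτ : IsPacking τ) (color : Fin n → Bool)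
    (c : Bool) : ∑ j, imbalance c ((σ j).map color) = ∑ j, imbalance c ((τ j).map color) := by
  simp only [imbalance, List.map_map]
  exact (hσ.sum_sum_map _).trans (hτ.sum_sum_map _).symm

lemma sum_length_le_mul_openBins {κ : ℕ} (hτ : ∀ j, (τ j).length ≤ κ) :
    ∑ j, (τ j).length ≤ κ * openBins τ := by
  rw [openBins, mul_comm, ← smul_eq_mul, ← sum_const, sum_filter]
  refine sum_le_sum fun j _ => ?_
  split_ifs with h
  · exact hτ j
  · simp [not_not.1 h]

lemma sum_imbalance_le_openBins (color : Fin n → Bool) (c : Bool)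
    (hτ : ∀ j, ((τ j).map color).IsChain (· ≠ ·)) :
    ∑ j, imbalance c ((τ j).map color) ≤ openBins τ := by
  rw [openBins, natCast_card_filter]
  refine sum_le_sum fun j _ => ?_
  split_ifs with h
  · exact imbalance_le_one (hτ j)
  · simp [not_not.1 h, imbalance]

lemma openBins_eq_card_length_eq_one_add (σ : Fin n → List (Fin n)) :
    openBins σ = #{j | (σ j).length = 1} + #{j | 2 ≤ (σ j).length} := by
  rw [openBins, card_filter, card_filter, card_filter, ← sum_add_distrib]
  refine sum_congr rfl fun j _ => ?_
  cases σ j <;> simp only [List.length_cons, List.length_nil] <;> split_ifs <;> simp_all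

end Packing

lemma exists_mem_ne_of_two_le_length {α C : Type*} {f : α → C} {b : List α}
    (h : (b.map f).IsChain (· ≠ ·)) (hb : 2 ≤ b.length) (c : C) : ∃ i ∈ b, f i ≠ c := by
  rcases b with _ | ⟨x, _ | ⟨y, t⟩⟩
  · simp at hb
  · simp at hb
  have hxy : f x ≠ f y := (List.isChain_cons_cons.1 h).1
  by_cases hx : f x = c
  · exact ⟨y, by simp, fun hy => hxy (hx.trans hy.symm)⟩
  · exact ⟨x, by simp, hx⟩

lemma UBinOK.append_singleton {n κ : ℕ} {C : Type*} {color : Fin n → C} {b : List (Fin n)}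
    {i : Fin n} (hb : UBinOK color κ b) (hlen : b.length < κ)
    (htop : ∀ x ∈ b.getLast?, color x ≠ color i) : UBinOK color κ (b ++ [i]) := by
  refine ⟨?_, by simpa using hlen⟩
  rw [List.map_append]
  refine List.isChain_append.2 ⟨hb.1, List.isChain_singleton _, fun x hx y hy => ?_⟩
  obtain ⟨k, hk, rfl⟩ := Option.mem_map.1 (List.getLast?_map ▸ hx)
  obtain rfl : color i = y := by simpa using hy
  exact htop k hk

namespace UNE

variable {n κ : ℕ} {σ : Fin n → List (Fin n)}

section Colors

variable {C : Type*} {color : Fin n → C}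

lemma length_lt_of_move (hσ : UNE color κ σ) {i j j' : Fin n} (hjj : j ≠ j') (hi : i ∈ σ j)
    (hlen : (σ j').length < κ) (htop : ∀ x ∈ (σ j').getLast?, color x ≠ color i) :
    (σ j').length < (σ j).length :=
  hσ.2.2 i j j' hjj hi ((hσ.2.1 j').append_singleton hlen htop)

lemma length_lt_of_two_le_length (hσ : UNE color κ σ) {j j' : Fin n} (hjj : j ≠ j')
    (hj : 2 ≤ (σ j).length) (hlen : (σ j').length < κ) : (σ j').length < (σ j).length := by
  cases htop : (σ j').getLast? with
  | none => rw [List.getLast?_eq_none_iff.1 htop, List.length_nil]; omega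
  | some x =>
    obtain ⟨i, hi, hix⟩ := exists_mem_ne_of_two_le_length (hσ.2.1 j).1 hj (color x)
    refine hσ.length_lt_of_move hjj hi hlen fun y hy => ?_
    obtain rfl : x = y := by simpa [htop] using hy
    exact Ne.symm hix

lemma card_two_le_length_lt_le_one (hσ : UNE color κ σ) :
    #{j | 2 ≤ (σ j).length ∧ (σ j).length < κ} ≤ 1 := by
  refine card_le_one.2 fun j hj j' hj' => by_contra fun hne => ?_
  simp only [mem_filter, mem_univ, true_and] at hj hj'
  exact (hσ.length_lt_of_two_le_length hne hj.1 hj'.2).asymm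
    (hσ.length_lt_of_two_le_length (Ne.symm hne) hj'.1 hj.2)

lemma color_eq_of_mem_getLast? (hσ : UNE color κ σ) {i₀ : Fin n} {j₀ j : Fin n}
    (h₀ : σ j₀ = [i₀]) (hj : (σ j).length < κ) {x : Fin n} (hx : x ∈ (σ j).getLast?) :
    color x = color i₀ := by
  by_contra hne
  have hjj : j₀ ≠ j := by
    rintro rfl
    obtain rfl : i₀ = x := by simpa [h₀] using hx
    exact hne rfl
  have hlt := hσ.length_lt_of_move (i := i₀) hjj (by simp [h₀]) hj fun y hy => by
    obtain rfl : y = x := Option.some.inj (hy.symm.trans hx)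
    exact hne
  simp_all

lemma card_two_le_length_le_openBins (hσ : UNE color κ σ) (hκ : 2 ≤ κ)
    {τ : Fin n → List (Fin n)} (hτ : IsPacking τ) (hτκ : ∀ j, (τ j).length ≤ κ) :
    #{j | 2 ≤ (σ j).length} ≤ openBins τ := by
  set A : Finset (Fin n) := {j | 2 ≤ (σ j).length}
  have hmid : #{j ∈ A | (σ j).length < κ} ≤ 1 := by
    rw [filter_filter]
    exact hσ.card_two_le_length_lt_le_one
  have hbin : ∀ j ∈ A, κ ≤ (σ j).length + if (σ j).length < κ then κ - 2 else 0 := by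
    intro j hj
    have h2 : 2 ≤ (σ j).length := by simpa [A] using hj
    have hle : (σ j).length ≤ κ := (hσ.2.1 j).2
    split_ifs <;> omega
  have hcount : κ * #A ≤ κ * openBins τ + (κ - 2) := calc
    κ * #A = ∑ j ∈ A, κ := by rw [sum_const, smul_eq_mul, mul_comm]
    _ ≤ ∑ j ∈ A, ((σ j).length + if (σ j).length < κ then κ - 2 else 0) := sum_le_sum hbin
    _ = ∑ j ∈ A, (σ j).length + (κ - 2) * #{j ∈ A | (σ j).length < κ} := by
      rw [sum_add_distrib, ← sum_filter, sum_const, smul_eq_mul, mul_comm]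
    _ ≤ ∑ j, (σ j).length + (κ - 2) * 1 :=
      add_le_add (sum_le_sum_of_subset (subset_univ A)) (Nat.mul_le_mul_left _ hmid)
    _ ≤ κ * openBins τ + (κ - 2) := by
      rw [hσ.1.sum_length, mul_one]
      exact add_le_add_left (hτ.sum_length.ge.trans (sum_length_le_mul_openBins hτκ)) _
  have : κ * #A < κ * (openBins τ + 1) := by rw [mul_add_one]; omega
  exact Nat.lt_add_one_iff.1 (Nat.lt_of_mul_lt_mul_left this)

end Colors

section BlackWhite

variable {color : Fin n → Bool}

lemma ite_length_eq_one_le_imbalance (hσ : UNE color κ σ) (hκ : Even κ) {i₀ j₀ : Fin n}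
    (h₀ : σ j₀ = [i₀]) (j : Fin n) :
    (if (σ j).length = 1 then 1 else 0 : ℤ) ≤ imbalance (color i₀) ((σ j).map color) := by
  obtain ⟨hchain, hle⟩ := hσ.2.1 j
  by_cases h1 : (σ j).length = 1
  · obtain ⟨i, hi⟩ := List.length_eq_one_iff.1 h1
    have hκ1 : 1 < κ := by obtain ⟨r, hr⟩ := hκ; omega
    have hc : color i = color i₀ :=
      hσ.color_eq_of_mem_getLast? (j := j) h₀ (by omega) (by simp [hi])
    simp [hi, hc, imbalance]
  rw [if_neg h1]
  rcases hle.lt_or_eq with hlt | hfull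
  · refine imbalance_nonneg_of_getLast? hchain fun x hx => ?_
    obtain ⟨y, hy, rfl⟩ := Option.mem_map.1 (List.getLast?_map ▸ hx)
    exact hσ.color_eq_of_mem_getLast? h₀ hlt hy
  · exact (imbalance_eq_zero_of_even_length hchain (by rwa [List.length_map, hfull])).ge

lemma card_length_eq_one_le_openBins (hσ : UNE color κ σ) (hκ : Even κ)
    {τ : Fin n → List (Fin n)} (hτ : IsPacking τ) (hτok : ∀ j, UBinOK color κ (τ j)) :
    #{j | (σ j).length = 1} ≤ openBins τ := by
  obtain h | ⟨j₀, hj₀⟩ := (univ.filter fun j => (σ j).length = 1).eq_empty_or_nonempty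
  · simp [h]
  obtain ⟨i₀, h₀⟩ := List.length_eq_one_iff.1 (mem_filter.1 hj₀).2
  have : (#{j | (σ j).length = 1} : ℤ) ≤ openBins τ := calc
    (#{j | (σ j).length = 1} : ℤ) = ∑ j, if (σ j).length = 1 then 1 else 0 :=
      natCast_card_filter _ _
    _ ≤ ∑ j, imbalance (color i₀) ((σ j).map color) :=
      sum_le_sum fun j _ => hσ.ite_length_eq_one_le_imbalance hκ h₀ j
    _ = ∑ j, imbalance (color i₀) ((τ j).map color) := hσ.1.sum_imbalance_eq hτ color _
    _ ≤ openBins τ := sum_imbalance_le_openBins color _ fun j => (hτok j).1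
  exact_mod_cast this

end BlackWhite

end UNE

theorem PoA_uniform_even_le_two_general (n κ : ℕ) (hκeven : Even κ) (hκ : 2 ≤ κ)
    (color : Fin n → Bool) (σ σstar : Fin n → List (Fin n))
    (hNE : UNE color κ σ)
    (hstar : IsPacking σstar ∧ ∀ j, UBinOK color κ (σstar j)) :
    openBins σ ≤ 2 * openBins σstar := by
  obtain ⟨hpack, hok⟩ := hstar
  calc openBins σ = #{j | (σ j).length = 1} + #{j | 2 ≤ (σ j).length} :=
        openBins_eq_card_length_eq_one_add σ
    _ ≤ openBins σstar + openBins σstar :=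
        add_le_add (hNE.card_length_eq_one_le_openBins hκeven hpack hok)
          (hNE.card_two_le_length_le_openBins hκ hpack fun j => (hok j).2)
    _ = 2 * openBins σstar := (two_mul _).symm

/-- For black and white bin packing games with uniform sizes and `κ` even, the
price of anarchy is at most `2`: every Nash equilibrium opens at most twice the
optimal number of bins. -/
theorem PoA_uniform_even_le_two (n κ : ℕ) (hκeven : Even κ) (hκ : 2 ≤ κ)
    (color : Fin n → Bool) (σ σstar : Fin n → List (Fin n))
    (hNE : UNE color κ σ)
    (hstar : IsPacking σstar ∧ ∀ j, UBinOK color κ (σstar j))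
    (hopt : ∀ τ, IsPacking τ → (∀ j, UBinOK color κ (τ j)) →
      openBins σstar ≤ openBins τ) :
    openBins σ ≤ 2 * openBins σstar :=
  PoA_uniform_even_le_two_general n κ hκeven hκ color σ σstar hNE hstar
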